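/- In the example φₙ sequence, the size strictly increases: with φ = (□a) U (◇b), σ = {a}, φ₀ = φ and φₙ₊₁ = fp(φₙ, σ), the syntax-tree size of xnf(φₙ₊₁) is strictly greater than that of xnf(φₙ) for every n ≥ 1, because xnf(φₙ₊₁) contains xnf(φₙ) as a proper subformula. -/
import Mathlib


namespace LTLfSynth

open scoped Classical

/-- LTLf formulas in negation normal form. -/
inductive LTLf (P : Type*) where
  | tt : LTLf P
  | ff : LTLf P
  | atom : P → LTLf P
  | natom : P → LTLf P
  | and : LTLf P → LTLf P → LTLf P
  | or : LTLf P → LTLf P → LTLf P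
  | next : LTLf P → LTLf P
  | wnext : LTLf P → LTLf P
  | until_ : LTLf P → LTLf P → LTLf P
  | release : LTLf P → LTLf P → LTLf P

variable {P : Type*}

/-- ◇true -/
def diamondTrue : LTLf P := .until_ .tt .tt

/-- □false -/
def boxFalse : LTLf P := .release .ff .ff

/-- Finite-trace satisfaction `ρ, i ⊨ φ`, where position `ρ.length` (and beyond)
corresponds to the empty suffix (empty-trace semantics). -/
def Sat (ρ : List (Set P)) : LTLf P → ℕ → Prop
  | .tt, _ => True
  | .ff, _ => False
  | .atom p, i => i < ρ.length ∧ p ∈ ρ.getD i ∅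
  | .natom p, i => i < ρ.length ∧ p ∉ ρ.getD i ∅
  | .and φ ψ, i => Sat ρ φ i ∧ Sat ρ ψ i
  | .or φ ψ, i => Sat ρ φ i ∨ Sat ρ ψ i
  | .next φ, i => i + 1 < ρ.length ∧ Sat ρ φ (i + 1)
  | .wnext φ, i => i + 1 < ρ.length → Sat ρ φ (i + 1)
  | .until_ φ ψ, i =>
      ∃ j, i ≤ j ∧ j < ρ.length ∧ Sat ρ ψ j ∧ ∀ k, i ≤ k → k < j → Sat ρ φ k
  | .release φ ψ, i =>
      ∀ j, i ≤ j → j < ρ.length → (Sat ρ ψ j ∨ ∃ k, i ≤ k ∧ k < j ∧ Sat ρ φ k)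

/-- Single-step formula progression `fp σ φ = fp(φ, σ)`. -/
noncomputable def fp (σ : Set P) : LTLf P → LTLf P
  | .tt => .tt
  | .ff => .ff
  | .atom p => if p ∈ σ then .tt else .ff
  | .natom p => if p ∈ σ then .ff else .tt
  | .and φ ψ => .and (fp σ φ) (fp σ ψ)
  | .or φ ψ => .or (fp σ φ) (fp σ ψ)
  | .next φ => .and φ diamondTrue
  | .wnext φ => .or φ boxFalse
  | .until_ .tt .tt => .tt
  | .until_ φ ψ => .or (fp σ ψ) (.and (fp σ φ) (.and (.until_ φ ψ) diamondTrue))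
  | .release .ff .ff => .ff
  | .release φ ψ => .and (fp σ ψ) (.or (fp σ φ) (.or (.release φ ψ) boxFalse))

/-- The next-normal-form transformation. -/
def xnf : LTLf P → LTLf P
  | .and φ ψ => .and (xnf φ) (xnf ψ)
  | .or φ ψ => .or (xnf φ) (xnf ψ)
  | .until_ .tt .tt => .until_ .tt .tt
  | .until_ φ ψ => .or (.and (xnf ψ) diamondTrue) (.and (xnf φ) (.next (.until_ φ ψ)))
  | .release .ff .ff => .release .ff .ff
  | .release φ ψ => .and (.or (xnf ψ) boxFalse) (.or (xnf φ) (.wnext (.release φ ψ)))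
  | φ => φ

/-- Syntax-tree size (number of nodes). -/
def size : LTLf P → ℕ
  | .and φ ψ => size φ + size ψ + 1
  | .or φ ψ => size φ + size ψ + 1
  | .next φ => size φ + 1
  | .wnext φ => size φ + 1
  | .until_ φ ψ => size φ + size ψ + 1
  | .release φ ψ => size φ + size ψ + 1
  | _ => 1

/-- Subformulas of a formula (including the formula itself). -/
def subf : LTLf P → Set (LTLf P)
  | .and φ ψ => insert (.and φ ψ) (subf φ ∪ subf ψ)
  | .or φ ψ => insert (.or φ ψ) (subf φ ∪ subf ψ)
  | .next φ => insert (.next φ) (subf φ)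
  | .wnext φ => insert (.wnext φ) (subf φ)
  | .until_ φ ψ => insert (.until_ φ ψ) (subf φ ∪ subf ψ)
  | .release φ ψ => insert (.release φ ψ) (subf φ ∪ subf ψ)
  | φ => {φ}

/-- The sequence `φ₀ = (□a) U (◇b)`, `φₙ₊₁ = fp(φₙ, {a})`. -/
noncomputable def phiSeq (a b : P) : ℕ → LTLf P
  | 0 => .until_ (.release .ff (.atom a)) (.until_ .tt (.atom b))
  | n + 1 => fp {a} (phiSeq a b n)


lemma subf_self (φ : LTLf P) : φ ∈ subf φ := by
  cases φ <;> simp [subf]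

lemma size_pos (φ : LTLf P) : 1 ≤ size φ := by
  cases φ <;> simp [size]

lemma phiSeq_shape (a b : P) (n : ℕ) :
    ∃ X Y Z : LTLf P,
      phiSeq a b (n + 1) = .or X (.and Y (.and (phiSeq a b n) Z)) := by
  induction n with
  | zero =>
      refine ⟨fp {a} (.until_ .tt (.atom b)),
        fp {a} (.release .ff (.atom a)), diamondTrue, ?_⟩
      simp [phiSeq, fp]
  | succ n ih =>
      obtain ⟨X, Y, Z, h⟩ := ih
      refine ⟨fp {a} X, fp {a} Y, fp {a} Z, ?_⟩
      show fp {a} (phiSeq a b (n + 1)) = _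
      conv_rhs => rw [show phiSeq a b (n + 1) = fp {a} (phiSeq a b n) from rfl]
      rw [h]
      simp [fp]

/-- for `n ≥ 1`, `xnf(φₙ₊₁)` strictly exceeds `xnf(φₙ)` in size, since it
contains `xnf(φₙ)` as a proper subformula. -/
theorem phiSeq_xnf_size_increasing (a b : P) (hab : a ≠ b) (n : ℕ) (hn : 1 ≤ n) :
    size (xnf (phiSeq a b n)) < size (xnf (phiSeq a b (n + 1))) ∧
    xnf (phiSeq a b n) ∈ subf (xnf (phiSeq a b (n + 1))) ∧
    xnf (phiSeq a b n) ≠ xnf (phiSeq a b (n + 1)) := by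
  obtain ⟨X, Y, Z, h⟩ := phiSeq_shape a b n
  rw [h]
  have hs : size (xnf (.or X (.and Y (.and (phiSeq a b n) Z)) : LTLf P))
      = size (xnf X) + (size (xnf Y) + (size (xnf (phiSeq a b n)) + size (xnf Z) + 1) + 1) + 1 := by
    simp [xnf, size]
  have h1 := size_pos (xnf X (P := P))
  have h2 := size_pos (xnf Y (P := P))
  have h3 := size_pos (xnf Z (P := P))
  refine ⟨by omega, ?_, ?_⟩
  · have := subf_self (xnf (phiSeq a b n) (P := P))
    simp [xnf, subf]
    tauto
  · intro he
    have := congrArg size he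
    omega

end LTLfSynth
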